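/- Let A be a column-regular n×n max-plus matrix, and let g ∈ (ℝ ∪ {-∞})^n, h, f ∈ ℝ^n with h, f regular and (h^- ⊕ f^-⊗A) ⊗ g ≤ 0. For pairs (x,y) of regular vectors with A⊗x = y, g ≤ x ≤ h, and y ≤ f, the minimum makespan max_i y_i − min_i x_i equals θ = 1ᵀ ⊗ A ⊗ (I ⊕ g⊗h^-) ⊗ 1 = max( max_{i,j} a_{ij}, max_{i,j,k} (a_{ij} + g_j − h_k) ), and all regular solutions are x = (I ⊕ θ^{-1}⊗1·1ᵀ⊗A) ⊗ u, y = A⊗x, with g ≤ u ≤ ((h^- ⊕ f^-⊗A) ⊗ (I ⊕ θ^{-1}⊗1·1ᵀ⊗A))^-. -/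

import Mathlib

open Finset

abbrev MP := WithBot ℝ

/-- Negation (max-plus multiplicative inverse), fixing -∞. -/
def mneg : MP → MP := WithBot.map Neg.neg

/-- Max-plus matrix-vector product. -/
def mpMulVec {m n : ℕ} (A : Fin m → Fin n → MP) (v : Fin n → MP) : Fin m → MP :=
  fun i => Finset.univ.sup fun j => A i j + v j

/-- The row vector h⁻ ⊕ f⁻ ⊗ A. -/
noncomputable def rvec {n : ℕ} (A : Fin n → Fin n → MP) (h f : Fin n → ℝ) : Fin n → MP :=
  fun k => ((-h k : ℝ) : MP) ⊔ (Finset.univ.sup fun i => ((-f i : ℝ) : MP) + A i k)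

/-- θ = 1ᵀ ⊗ A ⊗ (I ⊕ g⊗h⁻) ⊗ 1
      = max(max_{i,j} aᵢⱼ, max_{i,j,k} (aᵢⱼ + gⱼ - hₖ)). -/
noncomputable def theta {n : ℕ} (A : Fin n → Fin n → MP) (g : Fin n → MP) (h : Fin n → ℝ) : MP :=
  (Finset.univ.sup fun i => Finset.univ.sup fun j => A i j) ⊔
    (Finset.univ.sup fun i => Finset.univ.sup fun j => Finset.univ.sup fun k =>
      A i j + g j + ((-h k : ℝ) : MP))

/-- The matrix I ⊕ θ⁻¹ ⊗ 1·1ᵀ ⊗ A. -/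
noncomputable def matP {n : ℕ} (A : Fin n → Fin n → MP) (g : Fin n → MP) (h : Fin n → ℝ) :
    Fin n → Fin n → MP :=
  fun i j => (if i = j then (0 : MP) else ⊥) ⊔
    (mneg (theta A g h) + Finset.univ.sup fun k => A k j)

/-- The upper bound ((h⁻ ⊕ f⁻⊗A) ⊗ (I ⊕ θ⁻¹⊗1·1ᵀ⊗A))⁻ on u. -/
noncomputable def ubound {n : ℕ} (A : Fin n → Fin n → MP) (g : Fin n → MP) (h f : Fin n → ℝ) :
    Fin n → MP :=
  fun j => mneg (Finset.univ.sup fun k => rvec A h f k + matP A g h k j)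

/-- The makespan objective 1ᵀ ⊗ y ⊗ x⁻ ⊗ 1 = max_i yᵢ - min_i xᵢ. -/
noncomputable def obj {n : ℕ} (x y : Fin n → MP) : MP :=
  (Finset.univ.sup fun i => y i) + (Finset.univ.sup fun i => mneg (x i))

lemma mneg_coe' (r : ℝ) : mneg (r : MP) = ((-r : ℝ) : MP) := rfl

lemma MP.add_coe_le_coe_iff (a : MP) (c b : ℝ) :
    a + (c : MP) ≤ (b : MP) ↔ a ≤ ((b - c : ℝ) : MP) := by
  induction a using WithBot.recBotCoe with
  | bot => simp
  | coe r =>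
    rw [← WithBot.coe_add, WithBot.coe_le_coe, WithBot.coe_le_coe]
    constructor <;> intro <;> linarith

lemma MP.sup_add (a b c : MP) : (a ⊔ b) + c = (a + c) ⊔ (b + c) := by
  rcases le_total a b with h | h
  · rw [sup_eq_right.mpr h, sup_eq_right.mpr (add_le_add_left h c)]
  · rw [sup_eq_left.mpr h, sup_eq_left.mpr (add_le_add_left h c)]

lemma MP.add_sup (a b c : MP) : a + (b ⊔ c) = (a + b) ⊔ (a + c) := by
  rw [add_comm a, MP.sup_add, add_comm b a, add_comm c a]

lemma MP.sup_add_le {ι : Type*} (s : Finset ι) (f : ι → MP) (c d : MP)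
    (h : ∀ i ∈ s, f i + c ≤ d) : s.sup f + c ≤ d := by
  rcases s.eq_empty_or_nonempty with rfl | hs
  · simp
  · obtain ⟨b, hb, he⟩ := Finset.exists_mem_eq_sup s hs f
    rw [he]; exact h b hb

lemma MP.le_mneg_of (a : MP) (r : ℝ) (h1 : a ≠ ⊥) (h2 : a ≤ ((-r : ℝ) : MP)) :
    (r : MP) ≤ mneg a := by
  induction a using WithBot.recBotCoe with
  | bot => exact absurd rfl h1
  | coe s =>
    rw [mneg_coe', WithBot.coe_le_coe]
    have := WithBot.coe_le_coe.mp h2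
    linarith

lemma MP.mneg_le_rev (a : MP) (r : ℝ) (h : (r : MP) ≤ mneg a) : a ≤ ((-r : ℝ) : MP) := by
  induction a using WithBot.recBotCoe with
  | bot => exact bot_le
  | coe s =>
    rw [mneg_coe', WithBot.coe_le_coe] at h
    rw [WithBot.coe_le_coe]; linarith

lemma MP.bot_or_coe (a : MP) : a = ⊥ ∨ ∃ r : ℝ, a = (r : MP) := by
  induction a using WithBot.recBotCoe with
  | bot => exact Or.inl rfl
  | coe r => exact Or.inr ⟨r, rfl⟩

/-- Minimization of the makespan: for a column-regular matrix A, regular h and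
f with (h⁻ ⊕ f⁻⊗A) ⊗ g ≤ 0, the minimum of max_i yᵢ - min_i xᵢ over regular
(x,y) with A⊗x = y, g ≤ x ≤ h, y ≤ f equals
θ = 1ᵀ ⊗ A ⊗ (I ⊕ g⊗h⁻) ⊗ 1, and the regular solutions are exactly
x = (I ⊕ θ⁻¹⊗1·1ᵀ⊗A) ⊗ u, y = A⊗x, with
g ≤ u ≤ ((h⁻ ⊕ f⁻⊗A) ⊗ (I ⊕ θ⁻¹⊗1·1ᵀ⊗A))⁻. -/
theorem maxplus_min_makespan {n : ℕ} (A : Fin n → Fin n → MP)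
    (hA : ∀ j, ∃ i, A i j ≠ ⊥) (g : Fin n → MP) (h f : Fin n → ℝ)
    (hcond : (Finset.univ.sup fun j => rvec A h f j + g j) ≤ (0 : MP)) :
    (∀ x y : Fin n → ℝ,
      (∀ i, mpMulVec A (fun j => ((x j : ℝ) : MP)) i = ((y i : ℝ) : MP)) →
      (∀ i, g i ≤ ((x i : ℝ) : MP)) → (∀ i, x i ≤ h i) → (∀ i, y i ≤ f i) →
      theta A g h ≤ obj (fun i => ((x i : ℝ) : MP)) fun i => ((y i : ℝ) : MP)) ∧
    (∀ x y : Fin n → ℝ,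
      ((∀ i, mpMulVec A (fun j => ((x j : ℝ) : MP)) i = ((y i : ℝ) : MP)) ∧
        (∀ i, g i ≤ ((x i : ℝ) : MP)) ∧ (∀ i, x i ≤ h i) ∧ (∀ i, y i ≤ f i) ∧
        obj (fun i => ((x i : ℝ) : MP)) (fun i => ((y i : ℝ) : MP)) = theta A g h) ↔
      ((∀ i, mpMulVec A (fun j => ((x j : ℝ) : MP)) i = ((y i : ℝ) : MP)) ∧
        ∃ u : Fin n → ℝ,
          (∀ i, g i ≤ ((u i : ℝ) : MP)) ∧
          (∀ j, ((u j : ℝ) : MP) ≤ ubound A g h f j) ∧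
          (∀ i, ((x i : ℝ) : MP) =
            mpMulVec (matP A g h) (fun j => ((u j : ℝ) : MP)) i))) := by
  have part1 : ∀ x y : Fin n → ℝ,
      (∀ i, mpMulVec A (fun j => ((x j : ℝ) : MP)) i = ((y i : ℝ) : MP)) →
      (∀ i, g i ≤ ((x i : ℝ) : MP)) → (∀ i, x i ≤ h i) → (∀ i, y i ≤ f i) →
      theta A g h ≤ obj (fun i => ((x i : ℝ) : MP)) fun i => ((y i : ℝ) : MP) := by
    intro x y hxy hgx hxh hyf
    have hxy' : ∀ i, (univ.sup fun j => A i j + ((x j : ℝ) : MP) : MP) = ((y i : ℝ) : MP) := hxy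
    have hterm : ∀ i j, A i j + ((x j : ℝ) : MP) ≤ ((y i : ℝ) : MP) := by
      intro i j; rw [← hxy' i]
      exact Finset.le_sup (f := fun j => A i j + ((x j : ℝ) : MP)) (mem_univ j)
    have hobjge : ∀ i k, ((y i - x k : ℝ) : MP) ≤
        obj (fun i => ((x i : ℝ) : MP)) (fun i => ((y i : ℝ) : MP)) := by
      intro i k
      have h1 : ((y i : ℝ) : MP) ≤ univ.sup fun i => ((y i : ℝ) : MP) :=
        Finset.le_sup (f := fun i => ((y i : ℝ) : MP)) (mem_univ i)
      have h2 : ((-x k : ℝ) : MP) ≤ univ.sup fun i => mneg ((x i : ℝ) : MP) :=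
        Finset.le_sup (f := fun i => mneg ((x i : ℝ) : MP)) (mem_univ k)
      have h3 := add_le_add h1 h2
      rw [← WithBot.coe_add] at h3
      have he : y i - x k = y i + -x k := by ring
      rw [he]
      exact h3
    refine sup_le ?_ ?_
    · apply Finset.sup_le; intro i _; apply Finset.sup_le; intro j _
      exact le_trans ((MP.add_coe_le_coe_iff _ _ _).mp (hterm i j)) (hobjge i j)
    · apply Finset.sup_le; intro i _; apply Finset.sup_le; intro j _
      apply Finset.sup_le; intro k _
      calc A i j + g j + ((-h k : ℝ) : MP)
          ≤ A i j + ((x j : ℝ) : MP) + ((-x k : ℝ) : MP) := by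
            apply add_le_add (add_le_add_right (hgx j) _)
            exact WithBot.coe_le_coe.mpr (by linarith [hxh k])
        _ ≤ ((y i : ℝ) : MP) + ((-x k : ℝ) : MP) := add_le_add_left (hterm i j) _
        _ = ((y i - x k : ℝ) : MP) := by rw [← WithBot.coe_add, sub_eq_add_neg]
        _ ≤ _ := hobjge i k
  refine ⟨part1, ?_⟩
  intro x y
  by_cases hn : n = 0
  · subst hn
    constructor
    · rintro ⟨hxy, -, -, -, -⟩
      exact ⟨hxy, x, fun i => i.elim0, fun i => i.elim0, fun i => i.elim0⟩
    · rintro ⟨hxy, -⟩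
      refine ⟨hxy, fun i => i.elim0, fun i => i.elim0, fun i => i.elim0, ?_⟩
      simp [obj, theta]
  have hn' : 0 < n := Nat.pos_of_ne_zero hn
  haveI : Nonempty (Fin n) := ⟨⟨0, hn'⟩⟩
  have hne : (univ : Finset (Fin n)).Nonempty := univ_nonempty
  have hcne : ∀ j, (univ.sup fun k => A k j) ≠ ⊥ := by
    intro j hbot
    obtain ⟨i, hi⟩ := hA j
    exact hi (le_bot_iff.mp (hbot ▸ Finset.le_sup (f := fun k => A k j) (mem_univ i)))
  choose cR hcR using fun j => WithBot.ne_bot_iff_exists.mp (hcne j)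
  have hAθ : ∀ i j, A i j ≤ theta A g h := fun i j =>
    le_trans (le_trans (Finset.le_sup (f := fun j => A i j) (mem_univ j))
      (Finset.le_sup (f := fun i => univ.sup fun j => A i j) (mem_univ i))) le_sup_left
  have hθne : theta A g h ≠ ⊥ := by
    intro hbot
    obtain ⟨i1, h1⟩ := hA ⟨0, hn'⟩
    exact h1 (le_bot_iff.mp (hbot ▸ hAθ i1 ⟨0, hn'⟩))
  obtain ⟨t, ht⟩ := WithBot.ne_bot_iff_exists.mp hθne
  have hAc : ∀ i j, A i j ≤ ((cR j : ℝ) : MP) := fun i j =>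
    le_of_le_of_eq (Finset.le_sup (f := fun k => A k j) (mem_univ i)) (hcR j).symm
  have hP : ∀ i j, matP A g h i j =
      (if i = j then (0 : MP) else ⊥) ⊔ ((cR j - t : ℝ) : MP) := by
    intro i j
    unfold matP
    rw [← ht, ← hcR j, mneg_coe', ← WithBot.coe_add,
      show -t + cR j = cR j - t from by ring]
  have hP0 : ∀ j, (0 : MP) ≤ matP A g h j j := fun j => by
    rw [hP j j, if_pos rfl]; exact le_sup_left
  constructor
  · rintro ⟨hxy, hgx, hxh, hyf, hobj⟩
    have hxy' : ∀ i, (univ.sup fun j => A i j + ((x j : ℝ) : MP) : MP) = ((y i : ℝ) : MP) := hxy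
    have hterm : ∀ i j, A i j + ((x j : ℝ) : MP) ≤ ((y i : ℝ) : MP) := by
      intro i j; rw [← hxy' i]
      exact Finset.le_sup (f := fun j => A i j + ((x j : ℝ) : MP)) (mem_univ j)
    have hAyx : ∀ i k, A i k ≤ ((y i - x k : ℝ) : MP) := fun i k =>
      (MP.add_coe_le_coe_iff _ _ _).mp (hterm i k)
    have hAfx : ∀ i k, A i k ≤ ((f i - x k : ℝ) : MP) := fun i k =>
      le_trans (hAyx i k) (WithBot.coe_le_coe.mpr (by linarith [hyf i]))
    set Ymax := univ.sup' hne y with hY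
    set Xm := univ.sup' hne (fun i => -x i) with hX
    have hYm : ∀ i, y i ≤ Ymax := fun i => Finset.le_sup' y (mem_univ i)
    have hXm : ∀ i, -x i ≤ Xm := fun i => Finset.le_sup' (fun i => -x i) (mem_univ i)
    have hsupY : (univ.sup fun i => ((y i : ℝ) : MP)) = ((Ymax : ℝ) : MP) :=
      (Finset.coe_sup' hne y).symm
    have hsupX : (univ.sup fun i => mneg ((x i : ℝ) : MP)) = ((Xm : ℝ) : MP) :=
      (Finset.coe_sup' hne (fun i => -x i)).symm
    have htt : Ymax + Xm = t := by
      have h1 := hobj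
      rw [show obj (fun i => ((x i : ℝ) : MP)) (fun i => ((y i : ℝ) : MP)) =
        (univ.sup fun i => ((y i : ℝ) : MP)) + (univ.sup fun i => mneg ((x i : ℝ) : MP)) from rfl,
        hsupY, hsupX, ← WithBot.coe_add, ← ht] at h1
      exact_mod_cast h1
    have hc'j : ∀ j, cR j ≤ Ymax - x j := by
      intro j
      have h1 : ((cR j : ℝ) : MP) ≤ ((Ymax - x j : ℝ) : MP) := by
        rw [hcR j]
        apply Finset.sup_le; intro k _
        exact le_trans (hAyx k j) (WithBot.coe_le_coe.mpr (by linarith [hYm k]))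
      exact_mod_cast h1
    refine ⟨hxy, x, hgx, ?_, ?_⟩
    · intro j
      have hSle : (univ.sup fun k => rvec A h f k + matP A g h k j) ≤ ((-x j : ℝ) : MP) := by
        apply Finset.sup_le; intro k _
        rw [hP k j, MP.add_sup]
        apply sup_le
        · by_cases hkj : k = j
          · subst hkj
            rw [if_pos rfl, add_zero]
            show (((-h k : ℝ) : MP) ⊔ (univ.sup fun i => ((-f i : ℝ) : MP) + A i k)) ≤
              ((-x k : ℝ) : MP)
            apply sup_le
            · exact WithBot.coe_le_coe.mpr (by linarith [hxh k])
            · apply Finset.sup_le; intro i _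
              calc ((-f i : ℝ) : MP) + A i k
                  ≤ ((-f i : ℝ) : MP) + ((f i - x k : ℝ) : MP) := add_le_add_right (hAfx i k) _
                _ = ((-x k : ℝ) : MP) := by rw [← WithBot.coe_add]; congr 1; ring
          · rw [if_neg hkj, WithBot.add_bot]; exact bot_le
        · show (((-h k : ℝ) : MP) ⊔ (univ.sup fun i => ((-f i : ℝ) : MP) + A i k)) +
              ((cR j - t : ℝ) : MP) ≤ ((-x j : ℝ) : MP)
          rw [MP.sup_add]
          apply sup_le
          · rw [← WithBot.coe_add, WithBot.coe_le_coe]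
            have := hc'j j; have := hXm k; have := hxh k
            linarith
          · apply MP.sup_add_le; intro i _
            calc ((-f i : ℝ) : MP) + A i k + ((cR j - t : ℝ) : MP)
                ≤ ((-f i : ℝ) : MP) + ((f i - x k : ℝ) : MP) + ((cR j - t : ℝ) : MP) :=
                  add_le_add_left (add_le_add_right (hAfx i k) _) _
              _ ≤ ((-x j : ℝ) : MP) := by
                  rw [← WithBot.coe_add, ← WithBot.coe_add, WithBot.coe_le_coe]
                  have := hc'j j; have := hXm k; linarith [htt]
      have hSne : (univ.sup fun k => rvec A h f k + matP A g h k j) ≠ ⊥ := by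
        intro hb
        have h2 : ((-h j : ℝ) : MP) ≤ rvec A h f j + matP A g h j j := by
          calc ((-h j : ℝ) : MP) = ((-h j : ℝ) : MP) + 0 := (add_zero _).symm
            _ ≤ rvec A h f j + matP A g h j j :=
              add_le_add (le_sup_left : _ ≤ rvec A h f j) (hP0 j)
        have h1 := le_trans h2
          (Finset.le_sup (f := fun k => rvec A h f k + matP A g h k j) (mem_univ j))
        rw [hb] at h1
        exact absurd (le_bot_iff.mp h1) (by simp)
      exact MP.le_mneg_of _ (x j) hSne hSle
    · intro i
      refine le_antisymm ?_ ?_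
      · have h0 : ((x i : ℝ) : MP) ≤ matP A g h i i + ((x i : ℝ) : MP) := by
          nth_rewrite 1 [← zero_add ((x i : ℝ) : MP)]
          exact add_le_add_left (hP0 i) _
        exact le_trans h0
          (Finset.le_sup (f := fun j => matP A g h i j + ((x j : ℝ) : MP)) (mem_univ i))
      · show (univ.sup fun j => matP A g h i j + ((x j : ℝ) : MP)) ≤ ((x i : ℝ) : MP)
        apply Finset.sup_le; intro j _
        rw [hP i j, MP.sup_add]
        apply sup_le
        · by_cases hij : i = j
          · rw [if_pos hij, zero_add, hij]
          · rw [if_neg hij, WithBot.bot_add]; exact bot_le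
        · rw [← WithBot.coe_add, WithBot.coe_le_coe]
          have := hc'j j; have := hXm i; linarith [htt]
  · rintro ⟨hxy, u, hgu, hub, hxu⟩
    have hxy' : ∀ i, (univ.sup fun j => A i j + ((x j : ℝ) : MP) : MP) = ((y i : ℝ) : MP) := hxy
    have hxu' : ∀ i, ((x i : ℝ) : MP) =
        (univ.sup fun j => matP A g h i j + ((u j : ℝ) : MP) : MP) := hxu
    have hub' : ∀ j k, rvec A h f k + matP A g h k j ≤ ((-u j : ℝ) : MP) := by
      intro j k
      exact le_trans
        (Finset.le_sup (f := fun k => rvec A h f k + matP A g h k j) (mem_univ k))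
        (MP.mneg_le_rev _ _ (hub j))
    have hrv : ∀ j, rvec A h f j ≤ ((-u j : ℝ) : MP) := by
      intro j
      refine le_trans ?_ (hub' j j)
      nth_rewrite 1 [← add_zero (rvec A h f j)]
      exact add_le_add_right (hP0 j) _
    have hE1 : ∀ j, u j ≤ h j := by
      intro j
      have h1 := le_trans (le_sup_left : ((-h j : ℝ) : MP) ≤ rvec A h f j) (hrv j)
      rw [WithBot.coe_le_coe] at h1; linarith
    have hE2 : ∀ i j, ((-f i : ℝ) : MP) + A i j ≤ ((-u j : ℝ) : MP) := fun i j =>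
      le_trans (le_trans
        (Finset.le_sup (f := fun i => ((-f i : ℝ) : MP) + A i j) (mem_univ i))
        (le_sup_right : _ ≤ rvec A h f j)) (hrv j)
    have hE34 : ∀ j k, rvec A h f k + ((cR j - t : ℝ) : MP) ≤ ((-u j : ℝ) : MP) := by
      intro j k
      refine le_trans (add_le_add_right ?_ _) (hub' j k)
      rw [hP k j]; exact le_sup_right
    have hE3 : ∀ j k, cR j + u j ≤ t + h k := by
      intro j k
      have h1 := le_trans (add_le_add_left
        (le_sup_left : ((-h k : ℝ) : MP) ≤ rvec A h f k) _) (hE34 j k)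
      rw [← WithBot.coe_add, WithBot.coe_le_coe] at h1; linarith
    have hE4 : ∀ i k j (a : ℝ), A i k = (a : MP) → a + (cR j + u j) ≤ t + f i := by
      intro i k j a ha
      have h0 : ((-f i : ℝ) : MP) + A i k ≤ rvec A h f k :=
        le_trans (Finset.le_sup (f := fun i => ((-f i : ℝ) : MP) + A i k) (mem_univ i))
          (le_sup_right : _ ≤ rvec A h f k)
      have h1 := le_trans (add_le_add_left h0 _) (hE34 j k)
      rw [ha, ← WithBot.coe_add, ← WithBot.coe_add, WithBot.coe_le_coe] at h1
      linarith
    have hF1 : ∀ i, u i ≤ x i := by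
      intro i
      have h0 : ((u i : ℝ) : MP) ≤ matP A g h i i + ((u i : ℝ) : MP) := by
        nth_rewrite 1 [← zero_add ((u i : ℝ) : MP)]
        exact add_le_add_left (hP0 i) _
      have h1 : matP A g h i i + ((u i : ℝ) : MP) ≤ ((x i : ℝ) : MP) := by
        rw [hxu' i]
        exact Finset.le_sup (f := fun j => matP A g h i j + ((u j : ℝ) : MP)) (mem_univ i)
      exact_mod_cast le_trans h0 h1
    have hF2 : ∀ i j, cR j - t + u j ≤ x i := by
      intro i j
      have h1 : ((cR j - t : ℝ) : MP) + ((u j : ℝ) : MP) ≤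
          matP A g h i j + ((u j : ℝ) : MP) := by
        refine add_le_add_left ?_ _
        rw [hP i j]; exact le_sup_right
      have h2 : matP A g h i j + ((u j : ℝ) : MP) ≤ ((x i : ℝ) : MP) := by
        rw [hxu' i]
        exact Finset.le_sup (f := fun j => matP A g h i j + ((u j : ℝ) : MP)) (mem_univ j)
      have h3 := le_trans h1 h2
      rw [← WithBot.coe_add, WithBot.coe_le_coe] at h3; linarith
    set sR := univ.sup' hne (fun j => cR j + u j) with hsRd
    have hsR : ∀ j, cR j + u j ≤ sR := fun j =>
      Finset.le_sup' (fun j => cR j + u j) (mem_univ j)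
    have hsx : ∀ i, sR - t ≤ x i := by
      intro i
      have h1 : sR ≤ x i + t := Finset.sup'_le _ _ (fun j _ => by linarith [hF2 i j])
      linarith
    have hF3 : ∀ i, x i ≤ max (u i) (sR - t) := by
      intro i
      have h1 : ((x i : ℝ) : MP) ≤ ((max (u i) (sR - t) : ℝ) : MP) := by
        rw [hxu' i]
        apply Finset.sup_le; intro j _
        rw [hP i j, MP.sup_add]
        apply sup_le
        · by_cases hij : i = j
          · rw [if_pos hij, zero_add, ← hij]
            exact WithBot.coe_le_coe.mpr (le_max_left _ _)
          · rw [if_neg hij, WithBot.bot_add]; exact bot_le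
        · rw [← WithBot.coe_add, WithBot.coe_le_coe]
          have h2 := hsR j
          have h3 := le_max_right (u i) (sR - t)
          linarith
      exact_mod_cast h1
    have hgx : ∀ i, g i ≤ ((x i : ℝ) : MP) := fun i =>
      le_trans (hgu i) (WithBot.coe_le_coe.mpr (hF1 i))
    have hxh : ∀ i, x i ≤ h i := by
      intro i
      have h2 : sR - t ≤ h i := by
        have h3 : sR ≤ t + h i := Finset.sup'_le _ _ (fun j _ => hE3 j i)
        linarith
      have h4 := max_le (hE1 i) h2
      linarith [hF3 i]
    have hyf : ∀ i, y i ≤ f i := by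
      intro i
      have h1 : ((y i : ℝ) : MP) ≤ ((f i : ℝ) : MP) := by
        rw [← hxy' i]
        apply Finset.sup_le; intro j _
        rcases MP.bot_or_coe (A i j) with hb | ⟨a, ha⟩
        · rw [hb, WithBot.bot_add]; exact bot_le
        · rw [ha, ← WithBot.coe_add, WithBot.coe_le_coe]
          have h2 : a + u j ≤ f i := by
            have h3 := hE2 i j
            rw [ha, ← WithBot.coe_add, WithBot.coe_le_coe] at h3; linarith
          have h4 : a + sR ≤ t + f i := by
            have h5 : sR ≤ t + f i - a :=
              Finset.sup'_le _ _ (fun j' _ => by linarith [hE4 i j j' a ha])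
            linarith
          have h6 := max_le (show u j ≤ f i - a by linarith)
            (show sR - t ≤ f i - a by linarith)
          linarith [hF3 j]
      exact_mod_cast h1
    have hyt : ∀ i k, y i ≤ t + x k := by
      intro i k
      have h1 : ((y i : ℝ) : MP) ≤ ((t + x k : ℝ) : MP) := by
        rw [← hxy' i]
        apply Finset.sup_le; intro j _
        rcases MP.bot_or_coe (A i j) with hb | ⟨a, ha⟩
        · rw [hb, WithBot.bot_add]; exact bot_le
        · rw [ha, ← WithBot.coe_add, WithBot.coe_le_coe]
          have hac : a ≤ cR j := by
            have := hAc i j; rw [ha, WithBot.coe_le_coe] at this; exact this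
          have hat : a ≤ t := by
            have := hAθ i j; rw [ha, ← ht, WithBot.coe_le_coe] at this; exact this
          have h4 := hsx k
          have h5 := hsR j
          have h6 := max_le (show u j ≤ t + x k - a by linarith)
            (show sR - t ≤ t + x k - a by linarith)
          linarith [hF3 j]
      exact_mod_cast h1
    refine ⟨hxy, hgx, hxh, hyf, ?_⟩
    set Ymax := univ.sup' hne y with hY
    set Xm := univ.sup' hne (fun i => -x i) with hX
    have hsupY : (univ.sup fun i => ((y i : ℝ) : MP)) = ((Ymax : ℝ) : MP) :=
      (Finset.coe_sup' hne y).symm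
    have hsupX : (univ.sup fun i => mneg ((x i : ℝ) : MP)) = ((Xm : ℝ) : MP) :=
      (Finset.coe_sup' hne (fun i => -x i)).symm
    have hYX : Ymax + Xm ≤ t := by
      have h1 : Ymax ≤ t - Xm := by
        apply Finset.sup'_le; intro i _
        have h2 : Xm ≤ t - y i := by
          apply Finset.sup'_le; intro k _
          linarith [hyt i k]
        linarith
      linarith
    have hle : obj (fun i => ((x i : ℝ) : MP)) (fun i => ((y i : ℝ) : MP)) ≤ theta A g h := by
      rw [show obj (fun i => ((x i : ℝ) : MP)) (fun i => ((y i : ℝ) : MP)) =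
        (univ.sup fun i => ((y i : ℝ) : MP)) + (univ.sup fun i => mneg ((x i : ℝ) : MP)) from rfl,
        hsupY, hsupX, ← WithBot.coe_add, ← ht]
      exact_mod_cast hYX
    exact le_antisymm hle (part1 x y hxy hgx hxh hyf)
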